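/- Let μ ∈ ℝ with μ ≠ 14. The characteristic polynomial of the Jacobian matrix Df_μ(A₂(μ)) at A₂(μ) = ((8−μ)/(14−μ), 0, 1) factors as (X − 6(μ+6)/(μ−14))·(X − (31μ−110)/(μ−14))·(X + 6(μ−8)/(μ−14)), and the characteristic polynomial of Df_μ(A₃(μ)) at A₃(μ) = ((12−μ)/(14−μ), 0, 0) factors as (X − 27(μ−10)/(14−μ))·(X − 10(μ−10)/(μ−14))·(X + 2(μ−12)/(μ−14)). In particular the eigenvalues of Df_μ(A₂(μ)) are 6(μ+6)/(μ−14), (31μ−110)/(μ−14), −6(μ−8)/(μ−14), and those of Df_μ(A₃(μ)) are 27(μ−10)/(14−μ), 10(μ−10)/(μ−14), −2(μ−12)/(μ−14). -/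

import Mathlib

/-- The polymatrix replicator vector field `f_μ` on `ℝ³`, as a map `(Fin 3 → ℝ) → (Fin 3 → ℝ)`. -/
noncomputable def F (μ : ℝ) (p : Fin 3 → ℝ) : Fin 3 → ℝ :=
  ![p 0 * (1 - p 0) * (12 - μ + (μ - 14) * p 0 - 20 * p 1 - 4 * p 2),
    p 1 * (1 - p 1) * (-10 + 20 * p 0 + 4 * p 1 - 4 * p 2),
    p 2 * (1 - p 2) * (27 - 54 * p 0 + 11 * p 1 - 4 * p 2)]

/-- The Jacobian matrix `Df_μ(p)` of `f_μ` at `p`: its `(i,j)` entry is the partial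
derivative of the `i`-th component of `f_μ` in the `j`-th coordinate direction. -/
noncomputable def jacobian (μ : ℝ) (p : Fin 3 → ℝ) : Matrix (Fin 3) (Fin 3) ℝ :=
  Matrix.of fun i j => fderiv ℝ (fun q : Fin 3 → ℝ => F μ q i) p (Pi.single j 1)

open ContinuousLinearMap in
lemma entry_aux (c0 c1 c2 c3 : ℝ) (i j : Fin 3) (p : Fin 3 → ℝ) :
    fderiv ℝ (fun q : Fin 3 → ℝ => q i * (1 - q i) * (c0 + c1 * q 0 + c2 * q 1 + c3 * q 2)) p
      (Pi.single j 1)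
    = (1 - 2 * p i) * (c0 + c1 * p 0 + c2 * p 1 + c3 * p 2) * ((Pi.single j 1 : Fin 3 → ℝ) i)
      + p i * (1 - p i) *
        (c1 * (Pi.single j 1 : Fin 3 → ℝ) 0 + c2 * (Pi.single j 1 : Fin 3 → ℝ) 1
          + c3 * (Pi.single j 1 : Fin 3 → ℝ) 2) := by
  have h : HasFDerivAt
      (fun q : Fin 3 → ℝ => q i * (1 - q i) * (c0 + c1 * q 0 + c2 * q 1 + c3 * q 2)) _ p :=
    (((hasFDerivAt_apply (𝕜 := ℝ) i p).mul
      ((hasFDerivAt_const (1:ℝ) p).sub (hasFDerivAt_apply i p))).mul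
      ((((hasFDerivAt_const c0 p).add ((hasFDerivAt_apply (𝕜 := ℝ) 0 p).const_mul c1)).add
        ((hasFDerivAt_apply (𝕜 := ℝ) 1 p).const_mul c2)).add
        ((hasFDerivAt_apply (𝕜 := ℝ) 2 p).const_mul c3)))
  rw [h.fderiv]
  simp [ContinuousLinearMap.proj]
  ring

lemma jac0 (μ : ℝ) (p : Fin 3 → ℝ) (j : Fin 3) :
    jacobian μ p 0 j
    = (1 - 2 * p 0) * ((12 - μ) + (μ - 14) * p 0 + (-20) * p 1 + (-4) * p 2)
        * ((Pi.single j 1 : Fin 3 → ℝ) 0)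
      + p 0 * (1 - p 0) *
        ((μ - 14) * (Pi.single j 1 : Fin 3 → ℝ) 0 + (-20) * (Pi.single j 1 : Fin 3 → ℝ) 1
          + (-4) * (Pi.single j 1 : Fin 3 → ℝ) 2) := by
  have e : (fun q : Fin 3 → ℝ => F μ q 0)
      = fun q : Fin 3 → ℝ =>
          q 0 * (1 - q 0) * ((12 - μ) + (μ - 14) * q 0 + (-20) * q 1 + (-4) * q 2) := by
    funext q
    simp only [F, Matrix.cons_val_zero, Matrix.cons_val_one, Matrix.head_cons,
      Matrix.cons_val_two, Matrix.tail_cons]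
    ring
  rw [jacobian]; show fderiv ℝ _ p _ = _
  rw [e, entry_aux]

lemma jac1 (μ : ℝ) (p : Fin 3 → ℝ) (j : Fin 3) :
    jacobian μ p 1 j
    = (1 - 2 * p 1) * ((-10) + 20 * p 0 + 4 * p 1 + (-4) * p 2)
        * ((Pi.single j 1 : Fin 3 → ℝ) 1)
      + p 1 * (1 - p 1) *
        (20 * (Pi.single j 1 : Fin 3 → ℝ) 0 + 4 * (Pi.single j 1 : Fin 3 → ℝ) 1
          + (-4) * (Pi.single j 1 : Fin 3 → ℝ) 2) := by
  have e : (fun q : Fin 3 → ℝ => F μ q 1)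
      = fun q : Fin 3 → ℝ =>
          q 1 * (1 - q 1) * ((-10) + 20 * q 0 + 4 * q 1 + (-4) * q 2) := by
    funext q
    simp only [F, Matrix.cons_val_zero, Matrix.cons_val_one, Matrix.head_cons,
      Matrix.cons_val_two, Matrix.tail_cons]
    ring
  rw [jacobian]; show fderiv ℝ _ p _ = _
  rw [e, entry_aux]

lemma jac2 (μ : ℝ) (p : Fin 3 → ℝ) (j : Fin 3) :
    jacobian μ p 2 j
    = (1 - 2 * p 2) * (27 + (-54) * p 0 + 11 * p 1 + (-4) * p 2)
        * ((Pi.single j 1 : Fin 3 → ℝ) 2)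
      + p 2 * (1 - p 2) *
        ((-54) * (Pi.single j 1 : Fin 3 → ℝ) 0 + 11 * (Pi.single j 1 : Fin 3 → ℝ) 1
          + (-4) * (Pi.single j 1 : Fin 3 → ℝ) 2) := by
  have e : (fun q : Fin 3 → ℝ => F μ q 2)
      = fun q : Fin 3 → ℝ =>
          q 2 * (1 - q 2) * (27 + (-54) * q 0 + 11 * q 1 + (-4) * q 2) := by
    funext q
    simp only [F, Matrix.cons_val_zero, Matrix.cons_val_one, Matrix.head_cons,
      Matrix.cons_val_two, Matrix.tail_cons]
    ring
  rw [jacobian]; show fderiv ℝ _ p _ = _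
  rw [e, entry_aux]

open Polynomial in
/-- factorization of the characteristic polynomials of the Jacobian
matrices at the edge equilibria `A₂(μ) = ((8−μ)/(14−μ), 0, 1)` and
`A₃(μ) = ((12−μ)/(14−μ), 0, 0)`, exhibiting their eigenvalues. -/
theorem charpoly_A2_A3 (μ : ℝ) (hμ : μ ≠ 14) :
    (jacobian μ ![(8 - μ) / (14 - μ), 0, 1]).charpoly =
      (X - C (6 * (μ + 6) / (μ - 14))) * (X - C ((31 * μ - 110) / (μ - 14))) *
        (X + C (6 * (μ - 8) / (μ - 14))) ∧
    (jacobian μ ![(12 - μ) / (14 - μ), 0, 0]).charpoly =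
      (X - C (27 * (μ - 10) / (14 - μ))) * (X - C (10 * (μ - 10) / (μ - 14))) *
        (X + C (2 * (μ - 12) / (μ - 14))) := by
  have h14 : (14 : ℝ) - μ ≠ 0 := by intro h; apply hμ; linarith
  have h14' : μ - 14 ≠ 0 := by intro h; apply hμ; linarith
  constructor
  · set p : Fin 3 → ℝ := ![(8 - μ) / (14 - μ), 0, 1] with hp
    have hp0 : p 0 = (8 - μ) / (14 - μ) := rfl
    have hp1 : p 1 = 0 := rfl
    have hp2 : p 2 = 1 := rfl
    have h00 : jacobian μ p 0 0 = -(6 * (μ - 8) / (μ - 14)) := by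
      rw [jac0, hp0, hp1, hp2]; simp; field_simp; ring
    have h10 : jacobian μ p 1 0 = 0 := by rw [jac1, hp1]; simp
    have h11 : jacobian μ p 1 1 = 6 * (μ + 6) / (μ - 14) := by
      rw [jac1, hp0, hp1, hp2]; simp; field_simp; ring
    have h20 : jacobian μ p 2 0 = 0 := by rw [jac2, hp2]; simp
    have h21 : jacobian μ p 2 1 = 0 := by rw [jac2, hp2]; simp
    have h22 : jacobian μ p 2 2 = (31 * μ - 110) / (μ - 14) := by
      rw [jac2, hp0, hp1, hp2]; simp; field_simp; ring
    have cm : ∀ i j : Fin 3, i ≠ j →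
        (jacobian μ p).charmatrix i j = - Polynomial.C (jacobian μ p i j) :=
      fun i j h => Matrix.charmatrix_apply_ne _ i j h
    rw [Matrix.charpoly, Matrix.det_fin_three]
    rw [Matrix.charmatrix_apply_eq, Matrix.charmatrix_apply_eq, Matrix.charmatrix_apply_eq,
      cm 0 1 (by decide), cm 0 2 (by decide), cm 1 0 (by decide), cm 1 2 (by decide),
      cm 2 0 (by decide), cm 2 1 (by decide), h00, h10, h11, h20, h21, h22]
    simp only [map_zero, neg_zero, mul_zero, zero_mul, sub_zero, add_zero, zero_sub, map_neg,
      mul_neg, neg_neg, neg_mul]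
    ring
  · set p : Fin 3 → ℝ := ![(12 - μ) / (14 - μ), 0, 0] with hp
    have hp0 : p 0 = (12 - μ) / (14 - μ) := rfl
    have hp1 : p 1 = 0 := rfl
    have hp2 : p 2 = 0 := rfl
    have h00 : jacobian μ p 0 0 = -(2 * (μ - 12) / (μ - 14)) := by
      rw [jac0, hp0, hp1, hp2]; simp; field_simp; ring
    have h10 : jacobian μ p 1 0 = 0 := by rw [jac1, hp1]; simp
    have h11 : jacobian μ p 1 1 = 10 * (μ - 10) / (μ - 14) := by
      rw [jac1, hp0, hp1, hp2]; simp; field_simp; ring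
    have h20 : jacobian μ p 2 0 = 0 := by rw [jac2, hp2]; simp
    have h21 : jacobian μ p 2 1 = 0 := by rw [jac2, hp2]; simp
    have h22 : jacobian μ p 2 2 = 27 * (μ - 10) / (14 - μ) := by
      rw [jac2, hp0, hp1, hp2]; simp; field_simp; ring
    have cm : ∀ i j : Fin 3, i ≠ j →
        (jacobian μ p).charmatrix i j = - Polynomial.C (jacobian μ p i j) :=
      fun i j h => Matrix.charmatrix_apply_ne _ i j h
    rw [Matrix.charpoly, Matrix.det_fin_three]
    rw [Matrix.charmatrix_apply_eq, Matrix.charmatrix_apply_eq, Matrix.charmatrix_apply_eq,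
      cm 0 1 (by decide), cm 0 2 (by decide), cm 1 0 (by decide), cm 1 2 (by decide),
      cm 2 0 (by decide), cm 2 1 (by decide), h00, h10, h11, h20, h21, h22]
    simp only [map_zero, neg_zero, mul_zero, zero_mul, sub_zero, add_zero, zero_sub, map_neg,
      mul_neg, neg_neg, neg_mul]
    ring
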